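/- Let A be a Laplacian subalgebra of ℝ[x₁,…,x_n] and A_d = A ∩ ℝ[V]_d its degree-d part. Then A_d decomposes as the direct sum over i of A_d ∩ r^{2i}·H_{d−2i}, where H_e denotes the space of harmonic homogeneous polynomials of degree e. Equivalently, each A_d is compatible with the spherical-harmonic decomposition of ℝ[V]_d. -/

import Mathlib

/-!
Induct on the degree `d`. For `f ∈ A_d`, the inductive hypothesis decomposes `Δf ∈ A_{d-2}` as
`Σᵢ r^{2i} gᵢ`. For `g ∈ H_e` one has `Δ(r^{2(i+1)} g) = 2(i+1)(n+2e+2i) r^{2i} g`, with a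
positive scalar `cᵢ` once `n > 0`, so `S = Σᵢ cᵢ⁻¹ r^{2(i+1)} gᵢ` lies in `A` and `ΔS = Δf`.
Hence `f - S ∈ A ∩ H_d`, and `f = (f - S) + S` is the decomposition. When `n = 0` every
homogeneous polynomial of positive degree vanishes.
-/

open MvPolynomial

/-- The Laplacian Δ = Σᵢ ∂²/∂xᵢ². -/
noncomputable def lap {n : ℕ} (f : MvPolynomial (Fin n) ℝ) : MvPolynomial (Fin n) ℝ :=
  ∑ i, pderiv i (pderiv i f)

/-- ⟨∇f, ∇g⟩ = Σᵢ (∂f/∂xᵢ)(∂g/∂xᵢ). -/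
noncomputable def gradInner {n : ℕ} (f g : MvPolynomial (Fin n) ℝ) :
    MvPolynomial (Fin n) ℝ :=
  ∑ i, pderiv i f * pderiv i g

/-- r² = x₁² + ⋯ + xₙ². -/
noncomputable def rsq {n : ℕ} : MvPolynomial (Fin n) ℝ := ∑ i, X i ^ 2

lemma MvPolynomial.pderiv_eq_zero_of_isHomogeneous_zero {σ R : Type*} [CommSemiring R]
    {f : MvPolynomial σ R} (hf : f.IsHomogeneous 0) (i : σ) : pderiv i f = 0 := by
  rw [totalDegree_eq_zero_iff_eq_C.mp ((totalDegree_zero_iff_isHomogeneous _).mpr hf), pderiv_C]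

lemma MvPolynomial.IsHomogeneous.eq_zero_of_isEmpty {σ R : Type*} [CommSemiring R] [IsEmpty σ]
    {f : MvPolynomial σ R} {d : ℕ} (hf : f.IsHomogeneous d) (hd : d ≠ 0) : f = 0 := by
  by_contra hf0
  exact hd (hf.inj_right (isHomogeneous_of_isEmpty _ _ f) hf0)

variable {n : ℕ}

lemma lap_smul (c : ℝ) (f : MvPolynomial (Fin n) ℝ) : lap (c • f) = c • lap f := by
  simp [lap, Finset.smul_sum]

lemma lap_sub (f g : MvPolynomial (Fin n) ℝ) : lap (f - g) = lap f - lap g := by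
  simp [lap, Finset.sum_sub_distrib]

lemma lap_sum {ι : Type*} (s : Finset ι) (f : ι → MvPolynomial (Fin n) ℝ) :
    lap (∑ j ∈ s, f j) = ∑ j ∈ s, lap (f j) := by
  simp only [lap, map_sum]
  exact Finset.sum_comm

lemma lap_mul (f g : MvPolynomial (Fin n) ℝ) :
    lap (f * g) = lap f * g + 2 * gradInner f g + f * lap g := by
  have leibniz₂ (i : Fin n) : pderiv i (pderiv i (f * g)) =
      pderiv i (pderiv i f) * g + 2 * (pderiv i f * pderiv i g) + f * pderiv i (pderiv i g) := by
    simp only [Derivation.leibniz, map_add, smul_eq_mul]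
    ring
  simp only [lap, gradInner, leibniz₂, Finset.sum_add_distrib, Finset.mul_sum, Finset.sum_mul]

lemma MvPolynomial.IsHomogeneous.lap {d : ℕ} {f : MvPolynomial (Fin n) ℝ}
    (hf : f.IsHomogeneous d) : (lap f).IsHomogeneous (d - 2) :=
  IsHomogeneous.sum _ _ _ fun i _ => by simpa [Nat.sub_sub] using hf.pderiv.pderiv (i := i)

lemma lap_eq_zero_of_isHomogeneous_of_lt_two {d : ℕ} {f : MvPolynomial (Fin n) ℝ}
    (hf : f.IsHomogeneous d) (hd : d < 2) : lap f = 0 :=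
  Finset.sum_eq_zero fun i _ =>
    pderiv_eq_zero_of_isHomogeneous_zero (by simpa [show d - 1 = 0 by omega] using hf.pderiv) i

lemma isHomogeneous_rsq : (rsq : MvPolynomial (Fin n) ℝ).IsHomogeneous 2 :=
  IsHomogeneous.sum _ _ _ fun i _ => isHomogeneous_X_pow i 2

lemma pderiv_rsq (i : Fin n) : pderiv i (rsq : MvPolynomial (Fin n) ℝ) = C 2 * X i := by
  rw [rsq, map_sum, Finset.sum_eq_single i (fun j _ hj => by simp [pderiv_X_of_ne hj]) (by simp)]
  simp [map_ofNat]

lemma lap_rsq : lap (rsq : MvPolynomial (Fin n) ℝ) = C (2 * n : ℝ) := by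
  simp [lap, pderiv_rsq, mul_comm]

lemma gradInner_rsq {m : ℕ} {p : MvPolynomial (Fin n) ℝ} (hp : p.IsHomogeneous m) :
    gradInner rsq p = C (2 * m : ℝ) * p := by
  simp only [gradInner, pderiv_rsq, mul_assoc, ← Finset.mul_sum, hp.sum_X_mul_pderiv]
  simp [mul_assoc]

lemma lap_rsq_mul {m : ℕ} {p : MvPolynomial (Fin n) ℝ} (hp : p.IsHomogeneous m) :
    lap (rsq * p) = (2 * n + 4 * m : ℝ) • p + rsq * lap p := by
  rw [lap_mul, lap_rsq, gradInner_rsq hp, smul_eq_C_mul]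
  simp only [map_add, map_mul, map_ofNat, map_natCast]
  ring

section HarmonicDecomposition

variable {A : Subalgebra ℝ (MvPolynomial (Fin n) ℝ)} {d : ℕ} {f : MvPolynomial (Fin n) ℝ}

def lapCoeff (n e i : ℕ) : ℝ := 2 * (i + 1) * (n + 2 * e + 2 * i)

lemma lapCoeff_pos {e : ℕ} (hn : 0 < n) (i : ℕ) : 0 < lapCoeff n e i := by
  unfold lapCoeff
  positivity

lemma lap_rsq_pow_succ_mul {e : ℕ} {h : MvPolynomial (Fin n) ℝ} (hh : h.IsHomogeneous e)
    (hΔh : lap h = 0) (i : ℕ) : lap (rsq ^ (i + 1) * h) = lapCoeff n e i • (rsq ^ i * h) := by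
  induction i with
  | zero =>
    simp only [zero_add, pow_one, lap_rsq_mul hh, hΔh, mul_zero, add_zero, pow_zero, one_mul]
    congr 1
    simp only [lapCoeff]
    ring
  | succ i ih =>
    rw [pow_succ', mul_assoc, lap_rsq_mul ((isHomogeneous_rsq.pow (i + 1)).mul hh), ih,
      mul_smul_comm, ← mul_assoc, ← pow_succ', ← add_smul]
    congr 1
    simp only [lapCoeff]
    push_cast
    ring

lemma lap_rsq_pow_succ_mul_inv_smul {e : ℕ} {h : MvPolynomial (Fin n) ℝ} (hn : 0 < n)
    (hh : h.IsHomogeneous e) (hΔh : lap h = 0) (i : ℕ) :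
    lap (rsq ^ (i + 1) * ((lapCoeff n e i)⁻¹ • h)) = rsq ^ i * h := by
  rw [mul_smul_comm, lap_smul, lap_rsq_pow_succ_mul hh hΔh, inv_smul_smul₀ (lapCoeff_pos hn i).ne']

variable (A d f) in
def IsHarmonicDecomposition (h : ℕ → MvPolynomial (Fin n) ℝ) : Prop :=
  (∀ i ≤ d / 2, (h i).IsHomogeneous (d - 2 * i) ∧ lap (h i) = 0 ∧ rsq ^ i * h i ∈ A) ∧
    f = ∑ i ∈ Finset.range (d / 2 + 1), rsq ^ i * h i

lemma isHarmonicDecomposition_zero : IsHarmonicDecomposition A d 0 0 := by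
  simp [IsHarmonicDecomposition, lap, isHomogeneous_zero]

lemma isHarmonicDecomposition_of_lt_two (hfA : f ∈ A) (hf : f.IsHomogeneous d) (hd : d < 2) :
    IsHarmonicDecomposition A d f fun _ => f := by
  have hd0 : d / 2 = 0 := by omega
  refine ⟨fun i hi => ?_, by simp [hd0]⟩
  obtain rfl : i = 0 := by omega
  simpa using ⟨hf, lap_eq_zero_of_isHomogeneous_of_lt_two hf hd, hfA⟩

lemma isHarmonicDecomposition_add_sum {h₀ : MvPolynomial (Fin n) ℝ}
    {h : ℕ → MvPolynomial (Fin n) ℝ} (hh₀ : h₀.IsHomogeneous (d + 2)) (hΔh₀ : lap h₀ = 0)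
    (hh₀A : h₀ ∈ A)
    (hh : ∀ i ≤ d / 2, (h i).IsHomogeneous (d - 2 * i) ∧ lap (h i) = 0 ∧ rsq ^ (i + 1) * h i ∈ A) :
    IsHarmonicDecomposition A (d + 2) (h₀ + ∑ i ∈ Finset.range (d / 2 + 1), rsq ^ (i + 1) * h i)
      (fun | 0 => h₀ | i + 1 => h i) := by
  refine ⟨?_, ?_⟩
  · rintro (_ | i) hi
    · simpa using ⟨hh₀, hΔh₀, hh₀A⟩
    · simpa [show d + 2 - 2 * (i + 1) = d - 2 * i by omega] using hh i (by omega)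
  · rw [show (d + 2) / 2 + 1 = d / 2 + 1 + 1 by omega, Finset.sum_range_succ' _ (d / 2 + 1)]
    simp [add_comm]

lemma exists_isHarmonicDecomposition_of_lap (hn : 0 < n) (hr : rsq ∈ A) (hfA : f ∈ A)
    (hf : f.IsHomogeneous (d + 2)) {g : ℕ → MvPolynomial (Fin n) ℝ}
    (hg : IsHarmonicDecomposition A d (lap f) g) :
    ∃ h, IsHarmonicDecomposition A (d + 2) f h := by
  obtain ⟨hg, hfg⟩ := hg
  set h : ℕ → MvPolynomial (Fin n) ℝ := fun i => (lapCoeff n (d - 2 * i) i)⁻¹ • g i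
  set S := ∑ i ∈ Finset.range (d / 2 + 1), rsq ^ (i + 1) * h i
  have hh (i : ℕ) (hi : i ≤ d / 2) :
      (h i).IsHomogeneous (d - 2 * i) ∧ lap (h i) = 0 ∧ rsq ^ (i + 1) * h i ∈ A := by
    obtain ⟨hgi, hΔgi, hgiA⟩ := hg i hi
    refine ⟨(homogeneousSubmodule _ _ _).smul_mem _ hgi, by simp [h, lap_smul, hΔgi], ?_⟩
    rw [mul_smul_comm, pow_succ', mul_assoc]
    exact A.smul_mem (A.mul_mem hr hgiA) _
  have hS : S.IsHomogeneous (d + 2) := IsHomogeneous.sum _ _ _ fun i hi => by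
    have hi : i ≤ d / 2 := Finset.mem_range_succ_iff.mp hi
    simpa [show 2 * (i + 1) + (d - 2 * i) = d + 2 by omega] using
      (isHomogeneous_rsq.pow (i + 1)).mul (hh i hi).1
  have hSA : S ∈ A := A.sum_mem fun i hi =>
    (hh i (Finset.mem_range_succ_iff.mp hi)).2.2
  have hΔS : lap S = lap f := by
    rw [lap_sum, hfg]
    refine Finset.sum_congr rfl fun i hi => ?_
    obtain ⟨hgi, hΔgi, -⟩ := hg i (Finset.mem_range_succ_iff.mp hi)
    exact lap_rsq_pow_succ_mul_inv_smul hn hgi hΔgi i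
  rw [← sub_add_cancel f S]
  exact ⟨_, isHarmonicDecomposition_add_sum (hf.sub hS) (by rw [lap_sub, hΔS, sub_self])
    (A.sub_mem hfA hSA) hh⟩

end HarmonicDecomposition

/-- The degree-d part of a Laplacian algebra is compatible with the
spherical-harmonic decomposition: every homogeneous f ∈ A of degree d is a sum
f = Σᵢ r^{2i} hᵢ with hᵢ harmonic homogeneous of degree d-2i and r^{2i} hᵢ ∈ A. -/
theorem laplacian_algebra_harmonic_decomposition {n : ℕ}
    (A : Subalgebra ℝ (MvPolynomial (Fin n) ℝ))
    (hr : rsq ∈ A) (hΔ : ∀ f ∈ A, lap f ∈ A)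
    (d : ℕ) (f : MvPolynomial (Fin n) ℝ) (hfA : f ∈ A) (hf : f.IsHomogeneous d) :
    ∃ h : ℕ → MvPolynomial (Fin n) ℝ,
      (∀ i ≤ d / 2, (h i).IsHomogeneous (d - 2 * i) ∧ lap (h i) = 0 ∧
        rsq ^ i * h i ∈ A) ∧
      f = ∑ i ∈ Finset.range (d / 2 + 1), rsq ^ i * h i := by
  induction d using Nat.strong_induction_on generalizing f with
  | _ d ih =>
  rcases lt_or_ge d 2 with hd | hd
  · exact ⟨_, isHarmonicDecomposition_of_lt_two hfA hf hd⟩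
  obtain ⟨d, rfl⟩ := Nat.exists_eq_add_of_le' hd
  rcases Nat.eq_zero_or_pos n with rfl | hn
  · rw [hf.eq_zero_of_isEmpty (by omega)]
    exact ⟨0, isHarmonicDecomposition_zero⟩
  obtain ⟨g, hg⟩ := ih d (by omega) (lap f) (hΔ f hfA) (by simpa using hf.lap)
  exact exists_isHarmonicDecomposition_of_lap hn hr hfA hf hg
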